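/- For every integer n ≥ 0 and every pivoting-equivalence class s̄ of complete binary trees with 2n+1 vertices, the integer (2n+2)·H(s̄)·T(s̄) is divisible by 2^{2n+1}. -/

import Mathlib

/-- Binary trees: every vertex has an ordered pair of (possibly empty) subtrees.
`nil` is the empty tree; vertices are the `node` constructors. -/
inductive BTree : Type
  | nil : BTree
  | node : BTree → BTree → BTree
deriving DecidableEq

/-- The number of vertices of a binary tree. -/
def BTree.size : BTree → ℕ
  | .nil => 0
  | .node l r => 1 + l.size + r.size

/-- The product of the hook lengths of all vertices of a binary tree, where the
hook length of a vertex is the number of its descendants (including itself). -/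
def BTree.hookProd : BTree → ℕ
  | .nil => 1
  | .node l r => (BTree.node l r).size * l.hookProd * r.hookProd

/-- A binary tree is complete if for every vertex the two subtrees are either
both empty or both nonempty. -/
inductive BTree.Complete : BTree → Prop
  | nil : BTree.Complete .nil
  | leaf : BTree.Complete (.node .nil .nil)
  | node {l r : BTree} : l ≠ .nil → r ≠ .nil → l.Complete → r.Complete →
      BTree.Complete (.node l r)

/-- A basic pivoting: the exchange of the two subtrees of a non-leaf vertex. -/
inductive BTree.Pivot : BTree → BTree → Prop
  | swap {l r : BTree} : l ≠ .nil → r ≠ .nil → BTree.Pivot (.node l r) (.node r l)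
  | left {l l' : BTree} (r : BTree) : BTree.Pivot l l' →
      BTree.Pivot (.node l r) (.node l' r)
  | right (l : BTree) {r r' : BTree} : BTree.Pivot r r' →
      BTree.Pivot (.node l r) (.node l r')

/-- Two binary trees are pivoting-equivalent if one is obtained from the other by a
finite sequence of basic pivotings. -/
def BTree.PivotEquiv : BTree → BTree → Prop := Relation.ReflTransGen BTree.Pivot

/-- Labelled binary trees: every vertex carries a natural number label. -/
inductive LBTree : Type
  | nil : LBTree
  | node : ℕ → LBTree → LBTree → LBTree

/-- The underlying (unlabelled) shape of a labelled binary tree. -/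
def LBTree.shape : LBTree → BTree
  | .nil => .nil
  | .node _ l r => .node l.shape r.shape

/-- The multiset of labels of a labelled binary tree. -/
def LBTree.labels : LBTree → Multiset ℕ
  | .nil => 0
  | .node a l r => a ::ₘ (l.labels + r.labels)

/-- A labelled binary tree is increasing if the label of each vertex is smaller
than the labels of all its descendants. -/
inductive LBTree.Increasing : LBTree → Prop
  | nil : LBTree.Increasing .nil
  | node {a : ℕ} {l r : LBTree} :
      (∀ b ∈ l.labels, a < b) → (∀ b ∈ r.labels, a < b) →
      l.Increasing → r.Increasing → LBTree.Increasing (.node a l r)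

/-- `lcount s` is the number of increasing labellings of the binary tree `s`
by the labels `{1, …, size s}`. -/
noncomputable def lcount (s : BTree) : ℕ :=
  {l : LBTree | l.shape = s ∧
      l.labels = Multiset.map (· + 1) (Multiset.range s.size) ∧
      l.Increasing}.ncard

/-- `Tbar s` is the total number of increasing labelled binary trees whose shape is
pivoting-equivalent to `s`, i.e. `T(s̄) = ∑_{s' ∈ s̄} #L(s')`. -/
noncomputable def Tbar (s : BTree) : ℕ :=
  ∑ᶠ s' ∈ {s' | BTree.PivotEquiv s s'}, lcount s'

/-!
By the hook length formula `H(s) · #L(s) = |s|!`, and since `#L` is constant on a pivoting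
class, `(2n+2) · H(s̄) · T(s̄) = (|s| + 1)! · |s̄|`. For a complete tree with root subtrees `l`
and `r`, the class consists of the trees `l' r'` and `r' l'` with `l' ∈ l̄`, `r' ∈ r̄`; it has
`2 |l̄| |r̄|` elements if `l ≁ r` and `|l̄|²` elements if `l ∼ r`. Induction on `s` gives
`2 ^ |s| ∣ (|s| + 1)! · |s̄|`: split `(|s| + 1)! = C(|l|+|r|+2, |l|+1) · (|l|+1)! · (|r|+1)!`;
the missing factor `2` comes from the doubled class when `l ≁ r`, and from the even central
binomial coefficient when `l ∼ r`.
-/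

open Nat

namespace BTree

lemma not_pivot_nil (t : BTree) : ¬ Pivot .nil t := nofun

lemma not_pivot_leaf (t : BTree) : ¬ Pivot (.node .nil .nil) t := by
  rintro (⟨hl, -⟩ | ⟨_, h⟩ | ⟨_, h⟩)
  · exact hl rfl
  all_goals exact not_pivot_nil _ h

lemma Pivot.ne_nil {s t : BTree} (h : Pivot s t) : t ≠ .nil := by
  cases h <;> simp

lemma Pivot.size_eq {s t : BTree} (h : Pivot s t) : s.size = t.size := by
  induction h <;> simp only [size] at * <;> omega

lemma Pivot.symm {s t : BTree} (h : Pivot s t) : Pivot t s := by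
  induction h with
  | swap hl hr => exact .swap hr hl
  | left r _ ih => exact .left r ih
  | right l _ ih => exact .right l ih

instance : Std.Symm Pivot := ⟨fun _ _ h => h.symm⟩

lemma PivotEquiv.symm {s t : BTree} (h : PivotEquiv s t) : PivotEquiv t s :=
  Std.Symm.symm (r := Relation.ReflTransGen Pivot) _ _ h

lemma PivotEquiv.trans {s t u : BTree} (h₁ : PivotEquiv s t) (h₂ : PivotEquiv t u) :
    PivotEquiv s u :=
  Relation.ReflTransGen.trans h₁ h₂

lemma PivotEquiv.size_eq {s t : BTree} (h : PivotEquiv s t) : s.size = t.size := by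
  induction h with
  | refl => rfl
  | tail _ hp ih => exact ih.trans hp.size_eq

lemma PivotEquiv.ne_nil {s t : BTree} (h : PivotEquiv s t) (hs : s ≠ .nil) : t ≠ .nil := by
  cases h with
  | refl => exact hs
  | tail _ hp => exact hp.ne_nil

lemma PivotEquiv.node_congr {l l' r r' : BTree} (hl : PivotEquiv l l') (hr : PivotEquiv r r') :
    PivotEquiv (.node l r) (.node l' r') :=
  (hl.lift (BTree.node · r) fun _ _ => .left r).trans
    (hr.lift (BTree.node l') fun _ _ => .right l')

def pivotClass (s : BTree) : Set BTree := {t | PivotEquiv s t}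

lemma pivotClass_eq_singleton {s : BTree} (hs : ∀ t, ¬ Pivot s t) : pivotClass s = {s} := by
  ext t
  rw [pivotClass, Set.mem_ofPred_eq, Set.mem_singleton_iff, PivotEquiv,
    Relation.ReflTransGen.cases_head_iff]
  constructor
  · rintro (rfl | ⟨u, hu, -⟩)
    · rfl
    · exact (hs u hu).elim
  · rintro rfl
    exact .inl rfl

lemma pivotClass_eq_of_pivotEquiv {s t : BTree} (h : PivotEquiv s t) :
    pivotClass s = pivotClass t :=
  Set.ext fun _ => ⟨h.symm.trans, h.trans⟩

lemma pivotClass_node {l r : BTree} (hl : l ≠ .nil) (hr : r ≠ .nil) :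
    pivotClass (.node l r) =
      Function.uncurry BTree.node ''
        (pivotClass l ×ˢ pivotClass r ∪ pivotClass r ×ˢ pivotClass l) := by
  ext t
  constructor
  · intro h
    induction h with
    | refl => exact ⟨(l, r), .inl ⟨.refl, .refl⟩, rfl⟩
    | tail _ step ih =>
      obtain ⟨⟨x, y⟩, hxy, rfl⟩ := ih
      cases step with
      | swap => exact ⟨(y, x), hxy.symm.imp And.symm And.symm, rfl⟩
      | @left _ x' _ hp =>
        exact ⟨(x', y), hxy.imp (fun h => ⟨h.1.tail hp, h.2⟩) fun h => ⟨h.1.tail hp, h.2⟩, rfl⟩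
      | @right _ _ y' hp =>
        exact ⟨(x, y'), hxy.imp (fun h => ⟨h.1, h.2.tail hp⟩) fun h => ⟨h.1, h.2.tail hp⟩, rfl⟩
  · rintro ⟨⟨x, y⟩, ⟨hx, hy⟩ | ⟨hx, hy⟩, rfl⟩
    · exact hx.node_congr hy
    · exact (hy.node_congr hx).tail (.swap (hy.ne_nil hl) (hx.ne_nil hr))

lemma Complete.finite_pivotClass {s : BTree} (hs : s.Complete) : (pivotClass s).Finite := by
  induction hs with
  | nil => simp [pivotClass_eq_singleton not_pivot_nil]
  | leaf => simp [pivotClass_eq_singleton not_pivot_leaf]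
  | node hl hr _ _ ihl ihr =>
    rw [pivotClass_node hl hr]
    exact ((ihl.prod ihr).union (ihr.prod ihl)).image _

lemma injective_uncurry_node : Function.Injective (Function.uncurry node) := by
  rintro ⟨a, b⟩ ⟨c, d⟩ h
  simpa using h

lemma ncard_pivotClass_node_of_not_pivotEquiv {l r : BTree} (hl : l.Complete) (hr : r.Complete)
    (hl₀ : l ≠ .nil) (hr₀ : r ≠ .nil) (h : ¬ PivotEquiv l r) :
    (pivotClass (.node l r)).ncard = 2 * (pivotClass l).ncard * (pivotClass r).ncard := by
  have hdisj : Disjoint (pivotClass l ×ˢ pivotClass r) (pivotClass r ×ˢ pivotClass l) :=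
    Set.disjoint_left.mpr fun _ hp hq => h (hp.1.trans hq.1.symm)
  rw [pivotClass_node hl₀ hr₀, Set.ncard_image_of_injective _ injective_uncurry_node,
    Set.ncard_union_eq hdisj (hl.finite_pivotClass.prod hr.finite_pivotClass)
      (hr.finite_pivotClass.prod hl.finite_pivotClass), Set.ncard_prod, Set.ncard_prod]
  ring

lemma ncard_pivotClass_node_of_pivotEquiv {l r : BTree} (hl₀ : l ≠ .nil) (hr₀ : r ≠ .nil)
    (h : PivotEquiv l r) :
    (pivotClass (.node l r)).ncard = (pivotClass l).ncard * (pivotClass l).ncard := by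
  rw [pivotClass_node hl₀ hr₀, ← pivotClass_eq_of_pivotEquiv h, Set.union_self,
    Set.ncard_image_of_injective _ injective_uncurry_node, Set.ncard_prod]

lemma Complete.two_pow_size_dvd {s : BTree} (hs : s.Complete) :
    2 ^ s.size ∣ (s.size + 1)! * (pivotClass s).ncard := by
  induction hs with
  | nil => simp [size]
  | leaf => simp [size, pivotClass_eq_singleton not_pivot_leaf]
  | @node l r hl₀ hr₀ hl hr ihl ihr =>
    have hfact := add_choose_mul_factorial_mul_factorial (l.size + 1) (r.size + 1)
    rw [show (BTree.node l r).size + 1 = l.size + 1 + (r.size + 1) by simp only [size]; omega,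
      show (BTree.node l r).size = l.size + r.size + 1 by simp only [size]; omega]
    by_cases h : PivotEquiv l r
    · have hsize := h.size_eq
      rw [ncard_pivotClass_node_of_pivotEquiv hl₀ hr₀ h, ← hfact, ← hsize]
      have hcentral : 2 ∣ (l.size + 1 + (l.size + 1)).choose (l.size + 1) := by
        simpa [centralBinom_eq_two_mul_choose, two_mul] using two_dvd_centralBinom_succ l.size
      calc 2 ^ (l.size + l.size + 1) = 2 ^ l.size * 2 ^ l.size * 2 := by ring
        _ ∣ (l.size + 1)! * (pivotClass l).ncard * ((l.size + 1)! * (pivotClass l).ncard) *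
            (l.size + 1 + (l.size + 1)).choose (l.size + 1) := by gcongr
        _ = _ := by ring
    · rw [ncard_pivotClass_node_of_not_pivotEquiv hl hr hl₀ hr₀ h, ← hfact]
      calc 2 ^ (l.size + r.size + 1) = 2 ^ l.size * 2 ^ r.size * 2 := by ring
        _ ∣ (l.size + 1)! * (pivotClass l).ncard * ((r.size + 1)! * (pivotClass r).ncard) * 2 := by
          gcongr
        _ ∣ _ := Dvd.intro ((l.size + 1 + (r.size + 1)).choose (r.size + 1)) (by ring)

def increasingCount : BTree → ℕ
  | nil => 1
  | node l r => (l.size + r.size).choose r.size * l.increasingCount * r.increasingCount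

lemma hookProd_mul_increasingCount (s : BTree) : s.hookProd * s.increasingCount = s.size ! := by
  induction s with
  | nil => rfl
  | node l r ihl ihr =>
    calc (node l r).hookProd * (node l r).increasingCount
        = (l.size + r.size + 1) * ((l.size + r.size).choose r.size *
            (l.hookProd * l.increasingCount) * (r.hookProd * r.increasingCount)) := by
          simp only [hookProd, increasingCount, size]; ring
      _ = (node l r).size ! := by
          rw [ihl, ihr, add_choose_mul_factorial_mul_factorial, ← factorial_succ]
          simp only [size]; ring_nf

lemma Pivot.increasingCount_eq {s t : BTree} (h : Pivot s t) :
    s.increasingCount = t.increasingCount := by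
  induction h with
  | swap =>
    simp only [increasingCount]
    rw [add_comm, ← choose_symm_add]
    ring
  | left r hp ih => simp only [increasingCount, hp.size_eq, ih]
  | right l hp ih => simp only [increasingCount, hp.size_eq, ih]

lemma PivotEquiv.increasingCount_eq {s t : BTree} (h : PivotEquiv s t) :
    s.increasingCount = t.increasingCount := by
  induction h with
  | refl => rfl
  | tail _ hp ih => exact ih.trans hp.increasingCount_eq

end BTree

namespace Finset

variable {α : Type*} [DecidableEq α]

lemma val_add_val_sdiff {s t : Finset α} (h : s ⊆ t) : s.val + (t \ s).val = t.val := by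
  rw [sdiff_val, add_tsub_cancel_of_le (val_le_iff.mpr h)]

lemma exists_subset_val_eq_of_val_eq_add {t : Finset α} {x y : Multiset α}
    (h : t.val = x + y) : ∃ s ⊆ t, x = s.val ∧ y = (t \ s).val := by
  have hx : x.Nodup := (Multiset.nodup_add.mp (h ▸ t.nodup)).1
  refine ⟨⟨x, hx⟩, val_le_iff.mp (h ▸ Multiset.le_add_right x y), rfl, ?_⟩
  rw [sdiff_val, h, add_tsub_cancel_left]

end Finset

namespace LBTree

deriving instance DecidableEq for LBTree

lemma card_labels (t : LBTree) : Multiset.card t.labels = t.shape.size := by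
  induction t with
  | nil => rfl
  | node _ l r ihl ihr => simp only [labels, shape, BTree.size, Multiset.card_cons,
      Multiset.card_add, ihl, ihr]; ring

lemma Increasing.root_eq_min' {a : ℕ} {l r : LBTree} {A : Finset ℕ}
    (h : (LBTree.node a l r).Increasing) (hA : (LBTree.node a l r).labels = A.val)
    (hne : A.Nonempty) : a = A.min' hne := by
  have ha : a ∈ A := by rw [← Finset.mem_val, ← hA]; exact Multiset.mem_cons_self _ _
  refine le_antisymm ?_ (A.min'_le a ha)
  have hmin := A.min'_mem hne
  rw [← Finset.mem_val, ← hA, labels, Multiset.mem_cons, Multiset.mem_add] at hmin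
  cases h with
  | node hl hr _ _ =>
    rcases hmin with hmin | hmin | hmin
    exacts [hmin.ge, (hl _ hmin).le, (hr _ hmin).le]

def increasingTrees : BTree → Finset ℕ → Finset LBTree
  | .nil, A => if A = ∅ then {nil} else ∅
  | .node l r, A =>
    if h : A.Nonempty then
      ((A.erase (A.min' h)).powersetCard l.size).biUnion fun S =>
        (increasingTrees l S ×ˢ increasingTrees r (A.erase (A.min' h) \ S)).image
          fun p => node (A.min' h) p.1 p.2
    else ∅

lemma mem_increasingTrees {s : BTree} {A : Finset ℕ} {t : LBTree} :
    t ∈ increasingTrees s A ↔ t.shape = s ∧ t.labels = A.val ∧ t.Increasing := by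
  induction s generalizing A t with
  | nil =>
    cases t <;> by_cases hA : A = ∅ <;>
      simp [increasingTrees, shape, labels, hA, Increasing.nil, eq_comm (a := (0 : Multiset ℕ))]
  | node l r ihl ihr =>
    rcases A.eq_empty_or_nonempty with rfl | hA
    · cases t <;> simp [increasingTrees, shape, labels]
    set m := A.min' hA
    have hm : m ∈ A := A.min'_mem hA
    simp only [increasingTrees, dif_pos hA, Finset.mem_biUnion, Finset.mem_powersetCard,
      Finset.mem_image, Finset.mem_product, Prod.exists, ihl, ihr]
    constructor
    · rintro ⟨S, ⟨hS, -⟩, tl, tr, ⟨⟨htl, hSl, hl⟩, htr, hSr, hr⟩, rfl⟩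
      refine ⟨by simp [shape, htl, htr], ?_, .node ?_ ?_ hl hr⟩
      · rw [labels, hSl, hSr, Finset.val_add_val_sdiff hS, Finset.erase_val,
          Multiset.cons_erase hm]
      · exact fun b hb => A.min'_lt_of_mem_erase_min' hA (hS (Finset.mem_val.mp (hSl ▸ hb)))
      · exact fun b hb => A.min'_lt_of_mem_erase_min' hA
          (Finset.sdiff_subset (Finset.mem_val.mp (hSr ▸ hb)))
    · rintro ⟨hshape, hlabels, hinc⟩
      cases t with
      | nil => simp [shape] at hshape
      | node c tl tr =>
        obtain ⟨htl, htr⟩ := BTree.node.inj hshape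
        obtain rfl : c = m := hinc.root_eq_min' hlabels hA
        obtain ⟨S, hS, hSl, hSr⟩ := Finset.exists_subset_val_eq_of_val_eq_add (t := A.erase m)
          (x := tl.labels) (y := tr.labels) (by
            rw [Finset.erase_val, ← hlabels, labels, Multiset.erase_cons_head])
        cases hinc with
        | node _ _ hl hr =>
          refine ⟨S, ⟨hS, ?_⟩, tl, tr, ⟨⟨htl, hSl, hl⟩, htr, hSr, hr⟩, rfl⟩
          rw [Finset.card_def, ← hSl, card_labels, htl]

lemma card_increasingTrees (s : BTree) {A : Finset ℕ} (hA : A.card = s.size) :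
    (increasingTrees s A).card = s.increasingCount := by
  induction s generalizing A with
  | nil =>
    simp [increasingTrees, Finset.card_eq_zero.mp hA, BTree.increasingCount]
  | node l r ihl ihr =>
    have hne : A.Nonempty := Finset.card_pos.mp (by simp only [BTree.size] at hA; omega)
    set A' := A.erase (A.min' hne)
    have hA' : A'.card = l.size + r.size := by
      rw [Finset.card_erase_of_mem (A.min'_mem hne), hA]; simp only [BTree.size]; omega
    have hcard : ∀ S ∈ A'.powersetCard l.size,
        ((increasingTrees l S ×ˢ increasingTrees r (A' \ S)).image
          fun p => node (A.min' hne) p.1 p.2).card = l.increasingCount * r.increasingCount := by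
      intro S hS
      obtain ⟨hSA, hSl⟩ := Finset.mem_powersetCard.mp hS
      rw [Finset.card_image_of_injective _ fun p q h => by simpa [Prod.ext_iff] using h,
        Finset.card_product, ihl hSl, ihr (by rw [Finset.card_sdiff_of_subset hSA]; omega)]
    have hdisj : (A'.powersetCard l.size : Set (Finset ℕ)).PairwiseDisjoint fun S =>
        (increasingTrees l S ×ˢ increasingTrees r (A' \ S)).image
          fun p => node (A.min' hne) p.1 p.2 := by
      intro S _ S' _ hSS'
      refine Finset.disjoint_left.mpr fun t ht ht' => hSS' ?_
      simp only [Finset.mem_image, Finset.mem_product] at ht ht'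
      obtain ⟨⟨tl, tr⟩, ⟨htl, -⟩, rfl⟩ := ht
      obtain ⟨⟨tl', tr'⟩, ⟨htl', -⟩, h⟩ := ht'
      obtain ⟨-, rfl, -⟩ := node.inj h
      exact Finset.val_injective ((mem_increasingTrees.mp htl).2.1.symm.trans
        (mem_increasingTrees.mp htl').2.1)
    rw [increasingTrees, dif_pos hne, Finset.card_biUnion hdisj, Finset.sum_congr rfl hcard,
      Finset.sum_const, Finset.card_powersetCard, hA', smul_eq_mul, BTree.increasingCount,
      ← choose_symm_add, mul_assoc]

end LBTree

lemma lcount_eq_increasingCount (s : BTree) : lcount s = s.increasingCount := by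
  let A := (Finset.range s.size).map (addRightEmbedding 1)
  have hA : A.val = Multiset.map (· + 1) (Multiset.range s.size) := rfl
  have hcard : A.card = s.size := by simp [A]
  rw [lcount, ← LBTree.card_increasingTrees s hcard, ← Set.ncard_coe_finset]
  congr 1
  ext t
  rw [Finset.mem_coe, LBTree.mem_increasingTrees, hA]
  rfl

lemma Tbar_eq_increasingCount_mul_ncard (s : BTree) :
    Tbar s = s.increasingCount * (BTree.pivotClass s).ncard := by
  calc Tbar s = ∑ᶠ t ∈ BTree.pivotClass s, s.increasingCount * 1 :=
        finsum_mem_congr rfl fun t ht => by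
          rw [lcount_eq_increasingCount, ← BTree.PivotEquiv.increasingCount_eq ht, mul_one]
    _ = s.increasingCount * (BTree.pivotClass s).ncard := by rw [← mul_finsum_mem, finsum_one]

/-- For every pivoting-equivalence class `s̄` of complete binary trees with `2n+1`
vertices, `(2n+2) * H(s̄) * T(s̄)` is divisible by `2 ^ (2n+1)`. -/
theorem genocchi_class_divisibility' (n : ℕ) (s : BTree)
    (hs : s.Complete) (hsize : s.size = 2 * n + 1) :
    2 ^ (2 * n + 1) ∣ (2 * n + 2) * s.hookProd * Tbar s := by
  have hfactorial :
      (2 * n + 2) * s.hookProd * Tbar s = (s.size + 1)! * (BTree.pivotClass s).ncard := by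
    rw [Tbar_eq_increasingCount_mul_ncard, factorial_succ,
      ← BTree.hookProd_mul_increasingCount, hsize]
    ring
  rw [hfactorial, ← hsize]
  exact hs.two_pow_size_dvd
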